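/- arXiv:1107.0446 — 2 statements merged into one kernel-verified Lean document; each statement's English description precedes it below -/
import Mathlib

section
/- Let R₁ and R₂ be commutative rings and suppose every R₁-module M₁ admits a short exact sequence 0 → M₁ → P₁ → M₁ → 0 with pd_{R₁}(P₁) ≤ n, and likewise every R₂-module M₂ admits such a sequence over R₂. Then every (R₁ × R₂)-module M admits a short exact sequence 0 → M → P → M → 0 with pd_{R₁×R₂}(P) ≤ n. -/
/-!
Over `R₁ × R₂` every module `M` splits as `(R₁ ⊗ M) × (R₂ ⊗ M)`, with `Rᵢ ⊗ M` an `Rᵢ`-module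
that has a self-extension `0 → Rᵢ ⊗ M → Pᵢ → Rᵢ ⊗ M → 0` with `pd Pᵢ ≤ n`. Since `Rᵢ` is a
direct summand of `R₁ × R₂`, it is projective over `R₁ × R₂`, so restricting scalars does not
increase projective dimension; the product of the two sequences is the required one for `M`.
-/

universe u

/-- Projective dimension of the module `M` is at most `n`. -/
def pdLE (R : Type u) [CommRing R] : ℕ → (M : Type u) → [AddCommGroup M] → [Module R M] → Prop
  | 0, M, _, _ => Module.Projective R M
  | n+1, M, _, _ => ∃ (P : Type u) (_ : AddCommGroup P) (_ : Module R P) (f : P →ₗ[R] M),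
      Module.Projective R P ∧ Function.Surjective f ∧ pdLE R n (LinearMap.ker f)

theorem Module.Projective.of_prod_left {R M N : Type*} [Semiring R] [AddCommMonoid M]
    [Module R M] [AddCommMonoid N] [Module R N] [Module.Projective R (M × N)] :
    Module.Projective R M :=
  .of_split (LinearMap.inl R M N) (LinearMap.fst R M N) (LinearMap.fst_comp_inl R M N)

theorem Module.Projective.of_prod_right {R M N : Type*} [Semiring R] [AddCommMonoid M]
    [Module R M] [AddCommMonoid N] [Module R N] [Module.Projective R (M × N)] :
    Module.Projective R N :=
  .of_split (LinearMap.inr R M N) (LinearMap.snd R M N) (LinearMap.snd_comp_inr R M N)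

theorem Module.Projective.trans {R A P : Type*} [CommSemiring R] [Semiring A] [Algebra R A]
    [AddCommMonoid P] [Module A P] [Module R P] [IsScalarTower R A P]
    [Module.Projective R A] [hP : Module.Projective A P] : Module.Projective R P := by
  classical
  obtain ⟨s, hs⟩ := hP
  have : Module.Projective R (P →₀ A) := .of_equiv' (finsuppLequivDFinsupp R).symm
  exact .of_split (s.restrictScalars R) ((Finsupp.linearCombination A id).restrictScalars R)
    (LinearMap.ext hs)

theorem Function.Exact.prodMap {M N P M' N' P' : Type*} [Zero P] [Zero P']
    {f : M → N} {g : N → P} {f' : M' → N'} {g' : N' → P'}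
    (h : Function.Exact f g) (h' : Function.Exact f' g') :
    Function.Exact (Prod.map f f') (Prod.map g g') := by
  rintro ⟨x, x'⟩
  simp only [Prod.map_apply, Prod.mk_eq_zero, Set.range_prodMap, Set.mem_prod, h x, h' x']

open TensorProduct in
noncomputable def TensorProduct.decomposeOfEquivProd {R A B : Type*} [CommSemiring R]
    [AddCommMonoid A] [Module R A] [AddCommMonoid B] [Module R B]
    (e : R ≃ₗ[R] A × B) (M : Type*) [AddCommMonoid M] [Module R M] :
    M ≃ₗ[R] (A ⊗[R] M) × (B ⊗[R] M) :=
  (TensorProduct.lid R M).symm.trans <|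
    (TensorProduct.congr e (LinearEquiv.refl R M)).trans (TensorProduct.prodLeft R R A B M)

namespace pdLE

variable {R : Type u} [CommRing R]

theorem of_linearEquiv {n : ℕ} {M N : Type u} [AddCommGroup M] [Module R M]
    [AddCommGroup N] [Module R N] (e : M ≃ₗ[R] N) (h : pdLE R n M) : pdLE R n N := by
  induction n generalizing M N with
  | zero =>
    have : Module.Projective R M := h
    exact Module.Projective.of_equiv' e
  | succ n ih =>
    obtain ⟨P, _, _, f, hP, hf, hker⟩ := h
    refine ⟨P, _, _, e.toLinearMap ∘ₗ f, hP, e.surjective.comp hf, ?_⟩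
    rwa [LinearMap.ker_comp, LinearEquiv.ker, Submodule.comap_bot]

theorem prod {n : ℕ} {M N : Type u} [AddCommGroup M] [Module R M] [AddCommGroup N] [Module R N]
    (hM : pdLE R n M) (hN : pdLE R n N) : pdLE R n (M × N) := by
  induction n generalizing M N with
  | zero =>
    have : Module.Projective R M := hM
    have : Module.Projective R N := hN
    exact (inferInstance : Module.Projective R (M × N))
  | succ n ih =>
    obtain ⟨P, _, _, f, hP, hf, hker⟩ := hM
    obtain ⟨Q, _, _, g, hQ, hg, hker'⟩ := hN
    refine ⟨P × Q, _, _, f.prodMap g, inferInstance, hf.prodMap hg, ?_⟩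
    rw [LinearMap.ker_prodMap]
    refine of_linearEquiv ?_ (ih hker hker')
    exact
      { toFun := fun x => ⟨(x.1, x.2), x.1.2, x.2.2⟩
        invFun := fun x => (⟨x.1.1, x.2.1⟩, ⟨x.1.2, x.2.2⟩)
        map_add' := fun _ _ => rfl
        map_smul' := fun _ _ => rfl
        left_inv := fun _ => rfl
        right_inv := fun _ => rfl }

theorem restrictScalars {A : Type u} [CommRing A] [Algebra R A] [Module.Projective R A]
    {n : ℕ} {M : Type u} [AddCommGroup M] [Module A M] [Module R M] [IsScalarTower R A M]
    (h : pdLE A n M) : pdLE R n M := by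
  induction n generalizing M with
  | zero =>
    have : Module.Projective A M := h
    exact Module.Projective.trans (A := A)
  | succ n ih =>
    obtain ⟨P, _, _, f, hP, hf, hker⟩ := h
    let _ : Module R P := Module.compHom P (algebraMap R A)
    have : IsScalarTower R A P := IsScalarTower.of_compHom R A P
    exact ⟨P, _, _, f.restrictScalars R, Module.Projective.trans (A := A), hf,
      ih (M := LinearMap.ker f) hker⟩

end pdLE

def HasSelfExtensionPdLE (R : Type u) [CommRing R] (n : ℕ) (M : Type u) [AddCommGroup M]
    [Module R M] : Prop :=
  ∃ (P : Type u) (_ : AddCommGroup P) (_ : Module R P) (i : M →ₗ[R] P) (p : P →ₗ[R] M),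
    Function.Injective i ∧ Function.Surjective p ∧ Function.Exact i p ∧ pdLE R n P

namespace HasSelfExtensionPdLE

variable {R : Type u} [CommRing R] {n : ℕ}

theorem of_linearEquiv {M N : Type u} [AddCommGroup M] [Module R M] [AddCommGroup N]
    [Module R N] (e : M ≃ₗ[R] N) (h : HasSelfExtensionPdLE R n M) :
    HasSelfExtensionPdLE R n N := by
  obtain ⟨P, _, _, i, p, hi, hp, hip, hP⟩ := h
  refine ⟨P, _, _, i ∘ₗ e.symm.toLinearMap, e.toLinearMap ∘ₗ p, hi.comp e.symm.injective,
    e.surjective.comp hp, ?_, hP⟩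
  rwa [LinearEquiv.precomp_exact_iff_exact, LinearEquiv.postcomp_exact_iff_exact]

theorem prod {M N : Type u} [AddCommGroup M] [Module R M] [AddCommGroup N] [Module R N]
    (hM : HasSelfExtensionPdLE R n M) (hN : HasSelfExtensionPdLE R n N) :
    HasSelfExtensionPdLE R n (M × N) := by
  obtain ⟨P, _, _, i, p, hi, hp, hip, hP⟩ := hM
  obtain ⟨Q, _, _, j, q, hj, hq, hjq, hQ⟩ := hN
  refine ⟨P × Q, _, _, i.prodMap j, p.prodMap q, hi.prodMap hj, hp.prodMap hq, ?_, hP.prod hQ⟩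
  rw [LinearMap.coe_prodMap, LinearMap.coe_prodMap]
  exact hip.prodMap hjq

theorem restrictScalars {A : Type u} [CommRing A] [Algebra R A] [Module.Projective R A]
    {M : Type u} [AddCommGroup M] [Module A M] [Module R M] [IsScalarTower R A M]
    (h : HasSelfExtensionPdLE A n M) : HasSelfExtensionPdLE R n M := by
  obtain ⟨P, _, _, i, p, hi, hp, hip, hP⟩ := h
  let _ : Module R P := Module.compHom P (algebraMap R A)
  have : IsScalarTower R A P := IsScalarTower.of_compHom R A P
  exact ⟨P, _, _, i.restrictScalars R, p.restrictScalars R, hi, hp, hip, hP.restrictScalars⟩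

end HasSelfExtensionPdLE

/-- If every `R₁`-module and every `R₂`-module fits in a short exact
sequence `0 → M → P → M → 0` with `pd P ≤ n`, then so does every `(R₁ × R₂)`-module. -/
theorem stmt6 (R₁ R₂ : Type u) [CommRing R₁] [CommRing R₂] (n : ℕ)
    (h₁ : ∀ (M : Type u) [AddCommGroup M] [Module R₁ M],
      ∃ (P : Type u) (_ : AddCommGroup P) (_ : Module R₁ P)
        (i : M →ₗ[R₁] P) (p : P →ₗ[R₁] M),
        Function.Injective i ∧ Function.Surjective p ∧ Function.Exact i p ∧ pdLE R₁ n P)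
    (h₂ : ∀ (M : Type u) [AddCommGroup M] [Module R₂ M],
      ∃ (P : Type u) (_ : AddCommGroup P) (_ : Module R₂ P)
        (i : M →ₗ[R₂] P) (p : P →ₗ[R₂] M),
        Function.Injective i ∧ Function.Surjective p ∧ Function.Exact i p ∧ pdLE R₂ n P) :
    ∀ (M : Type u) [AddCommGroup M] [Module (R₁ × R₂) M],
      ∃ (P : Type u) (_ : AddCommGroup P) (_ : Module (R₁ × R₂) P)
        (i : M →ₗ[R₁ × R₂] P) (p : P →ₗ[R₁ × R₂] M),
        Function.Injective i ∧ Function.Surjective p ∧ Function.Exact i p ∧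
          pdLE (R₁ × R₂) n P := by
  intro M _ _
  let _ : Algebra (R₁ × R₂) R₁ := (RingHom.fst R₁ R₂).toAlgebra
  let _ : Algebra (R₁ × R₂) R₂ := (RingHom.snd R₁ R₂).toAlgebra
  -- the identity of `R₁ × R₂`, seen as landing in the product of the modules `R₁` and `R₂`
  let e := LinearEquiv.ofBijective ((Algebra.linearMap (R₁ × R₂) R₁).prod
    (Algebra.linearMap (R₁ × R₂) R₂)) ⟨fun _ _ h => h, fun x => ⟨x, rfl⟩⟩
  have := Module.Projective.of_equiv' e
  have : Module.Projective (R₁ × R₂) R₁ := .of_prod_left (N := R₂)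
  have : Module.Projective (R₁ × R₂) R₂ := .of_prod_right (M := R₁)
  have h₁' : HasSelfExtensionPdLE R₁ n (TensorProduct (R₁ × R₂) R₁ M) := h₁ _
  have h₂' : HasSelfExtensionPdLE R₂ n (TensorProduct (R₁ × R₂) R₂ M) := h₂ _
  exact (h₁'.restrictScalars.prod h₂'.restrictScalars).of_linearEquiv
    (TensorProduct.decomposeOfEquivProd e M).symm
end

section
/- Let R be a commutative ring and 0 → M → P → M → 0 a short exact sequence of R-modules. Then for every R-module N and every k > pd_R(P) + 1 (with pd_R(P) finite), there is an isomorphism Ext^k_R(M,N) ≅ Ext^{k+1}_R(M,N). -/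
/-!
The connecting map of the long exact `Ext(-, N)` sequence of `0 → M → P → M → 0` is an
isomorphism `Ext^k(M, N) ≅ Ext^{k+1}(M, N)` as soon as `Ext^k(P, N)` and `Ext^{k+1}(P, N)`
vanish, which happens for `k > pd P`. The long exact sequence is built by hand from a horseshoe:
a short exact sequence `0 → A → B → C → 0` is covered by the free modules
`A →₀ R`, `(A →₀ R) × (C →₀ R)`, `C →₀ R`, the kernels of the three covers form a short exact
sequence again, and iterating gives free resolutions of `A`, `B`, `C` which are degreewise split
extensions of each other. Their Hom complexes into `N` then form a short exact sequence of cochain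
complexes, whose connecting map in cohomology is the required isomorphism. Vanishing of `Ext`
above the projective dimension follows from the same isomorphism by dimension shifting.
-/

universe u
open CategoryTheory

/-- `Ext^n_R(M,N)` as a module. -/
noncomputable def extMod (R : Type u) [CommRing R] (n : ℕ) (M N : Type u)
    [AddCommGroup M] [Module R M] [AddCommGroup N] [Module R N] : ModuleCat.{u} R :=
  ((Ext R (ModuleCat.{u} R) n).obj (Opposite.op (ModuleCat.of R M))).obj (ModuleCat.of R N)

open Limits

namespace ChainComplex

universe v w t

variable (R : Type w) [Ring R] {C : Type t} [Category.{v} C] [Abelian C] [Linear R C]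

/-- On objects this is `ChainComplex.linearYonedaObj`, the complex through which `Ext` is
computed. -/
noncomputable def linearYonedaFunctor (N : C) :
    (ChainComplex C ℕ)ᵒᵖ ⥤ CochainComplex (ModuleCat.{v} R) ℕ :=
  (((linearYoneda R C).obj N).rightOp.mapHomologicalComplex _).op ⋙
    HomologicalComplex.unopFunctor _ _

-- Instance search does not identify `(ComplexShape.down ℕ).symm` with `ComplexShape.up ℕ`.
instance (N : C) : (linearYonedaFunctor R N).Additive where
  map_add := (inferInstance : ((((linearYoneda R C).obj N).rightOp.mapHomologicalComplex
    (ComplexShape.down ℕ)).op ⋙ HomologicalComplex.unopFunctor _ _).Additive).map_add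

variable {R} in
lemma shortExact_linearYonedaFunctor {S : ShortComplex (ChainComplex C ℕ)}
    (hS : ∀ n, (S.map (HomologicalComplex.eval C _ n)).Splitting) (N : C) :
    (S.op.map (linearYonedaFunctor R N)).ShortExact := by
  refine HomologicalComplex.shortExact_of_degreewise_shortExact _ fun n => ?_
  exact ((hS n).op.map ((linearYoneda R C).obj N)).shortExact

end ChainComplex

structure ModuleSES (R : Type u) [Ring R] where
  A : ModuleCat.{u} R
  B : ModuleCat.{u} R
  C : ModuleCat.{u} R
  i : A →ₗ[R] B
  p : B →ₗ[R] C
  injective_i : Function.Injective i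
  surjective_p : Function.Surjective p
  exact : Function.Exact i p

namespace ModuleSES

open Finsupp (linearCombination)

variable {R : Type u} [Ring R] (S : ModuleSES R)

-- The generators of `C` are lifted along `p`, as in the horseshoe lemma.
noncomputable def cover : (S.A →₀ R) × (S.C →₀ R) →ₗ[R] S.B :=
  (S.i ∘ₗ linearCombination R id).coprod (linearCombination R (Function.surjInv S.surjective_p))

lemma cover_apply (x : (S.A →₀ R) × (S.C →₀ R)) :
    S.cover x = S.i (linearCombination R id x.1) +
      linearCombination R (Function.surjInv S.surjective_p) x.2 := rfl

lemma cover_inl (x : S.A →₀ R) : S.cover (x, 0) = S.i (linearCombination R id x) := by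
  simp [cover_apply]

lemma p_comp_linearCombination_surjInv :
    S.p ∘ₗ linearCombination R (Function.surjInv S.surjective_p) = linearCombination R id := by
  ext c
  simp [Function.surjInv_eq S.surjective_p c]

lemma p_cover (x : (S.A →₀ R) × (S.C →₀ R)) :
    S.p (S.cover x) = linearCombination R id x.2 := by
  rw [cover_apply, map_add, S.exact.apply_apply_eq_zero, zero_add,
    ← LinearMap.comp_apply, p_comp_linearCombination_surjInv]

lemma cover_surjective : Function.Surjective S.cover := by
  intro b
  obtain ⟨a, ha⟩ := (S.exact (b - S.cover (0, Finsupp.single (S.p b) 1))).1 (by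
    simp [p_cover])
  obtain ⟨x, rfl⟩ := Finsupp.linearCombination_id_surjective R S.A a
  refine ⟨(x, 0) + (0, Finsupp.single (S.p b) 1), ?_⟩
  rw [map_add, cover_inl, ha, sub_add_cancel]

noncomputable def syzygy : ModuleSES R where
  A := ModuleCat.of R (LinearMap.ker (linearCombination R (id : S.A → S.A)))
  B := ModuleCat.of R (LinearMap.ker S.cover)
  C := ModuleCat.of R (LinearMap.ker (linearCombination R (id : S.C → S.C)))
  i := (LinearMap.inl R _ _).restrict fun x (hx : _ = 0) => show S.cover (x, 0) = 0 by
    rw [cover_inl, hx, map_zero]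
  p := (LinearMap.snd R _ _).restrict fun x (hx : _ = 0) =>
    show linearCombination R id x.2 = 0 by rw [← p_cover, hx, map_zero]
  injective_i _ _ h := Subtype.ext (congrArg (·.1.1) h)
  surjective_p := by
    rintro ⟨y, hy : _ = 0⟩
    obtain ⟨a, ha⟩ := (S.exact (linearCombination R (Function.surjInv S.surjective_p) y)).1 (by
      rw [← LinearMap.comp_apply, p_comp_linearCombination_surjInv, hy])
    obtain ⟨x, hx⟩ := Finsupp.linearCombination_id_surjective R S.A (-a)
    refine ⟨⟨(x, y), ?_⟩, rfl⟩
    show S.cover (x, y) = 0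
    rw [cover_apply, hx, map_neg, ha, neg_add_cancel]
  exact := by
    rintro ⟨⟨x, y⟩, hxy : S.cover (x, y) = 0⟩
    refine ⟨fun hy => ?_, ?_⟩
    · obtain rfl : y = 0 := congrArg Subtype.val hy
      refine ⟨⟨x, S.injective_i ?_⟩, rfl⟩
      rw [← cover_inl, hxy, map_zero]
    · rintro ⟨x', h⟩
      exact Subtype.ext (congrArg (·.1.2) h).symm

noncomputable def syzygies : ℕ → ModuleSES R
  | 0 => S
  | n + 1 => (syzygies n).syzygy

end ModuleSES

structure SyzygyData (R : Type u) [Ring R] where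
  X : ℕ → ModuleCat.{u} R
  F : ℕ → ModuleCat.{u} R
  projective : ∀ n, Projective (F n)
  ε : ∀ n, F n →ₗ[R] X n
  surjective_ε : ∀ n, Function.Surjective (ε n)
  ι : ∀ n, X (n + 1) →ₗ[R] F n
  injective_ι : ∀ n, Function.Injective (ι n)
  exact : ∀ n, Function.Exact (ι n) (ε n)

namespace SyzygyData

variable {R : Type u} [Ring R] (D : SyzygyData R)

noncomputable def d (n : ℕ) : D.F (n + 1) ⟶ D.F n := ModuleCat.ofHom (D.ι n ∘ₗ D.ε (n + 1))

lemma exact_d (n : ℕ) : Function.Exact (D.d (n + 1)) (D.d n) := by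
  simp only [d, ModuleCat.hom_ofHom]
  rw [(D.injective_ι n).comp_exact_iff_exact, (D.surjective_ε (n + 2)).comp_exact_iff_exact]
  exact D.exact (n + 1)

noncomputable def complex : ChainComplex (ModuleCat.{u} R) ℕ :=
  ChainComplex.of D.F D.d fun n => ModuleCat.hom_ext (D.exact_d n).linearMap_comp_eq_zero

lemma complex_d (n : ℕ) : D.complex.d (n + 1) n = D.d n := ChainComplex.of_d _ _ n

lemma complex_exactAt_succ (n : ℕ) : D.complex.ExactAt (n + 1) := by
  rw [HomologicalComplex.exactAt_iff' _ (n + 1 + 1) (n + 1) n (by simp) (by simp)]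
  refine ModuleCat.shortComplex_exact _ ?_
  change Function.Exact (D.complex.d (n + 1 + 1) (n + 1)) (D.complex.d (n + 1) n)
  rw [complex_d, complex_d]
  exact D.exact_d n

lemma exact_d_ε : Function.Exact (D.d 0) (D.ε 0) :=
  (D.surjective_ε 1).comp_exact_iff_exact.2 (D.exact 0)

lemma complex_d_comp_ε : D.complex.d 1 0 ≫ ModuleCat.ofHom (D.ε 0) = 0 := by
  rw [complex_d]
  ext x
  exact D.exact_d_ε.apply_apply_eq_zero x

noncomputable def projectiveResolution : ProjectiveResolution (D.X 0) where
  complex := D.complex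
  projective := D.projective
  π := (ChainComplex.toSingle₀Equiv _ _).symm ⟨ModuleCat.ofHom (D.ε 0), D.complex_d_comp_ε⟩
  quasiIso := ⟨fun n => by
    cases n with
    | zero =>
      rw [ChainComplex.quasiIsoAt₀_iff, ShortComplex.quasiIso_iff_of_zeros']
      · refine (ShortComplex.exact_and_epi_g_iff_of_iso ?_).2
          ⟨ModuleCat.shortComplex_exact (.mk _ _ D.complex_d_comp_ε) (by
            change Function.Exact (D.complex.d 1 0) (D.ε 0)
            rw [complex_d]
            exact D.exact_d_ε),
            (ModuleCat.epi_iff_surjective _).2 (D.surjective_ε 0)⟩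
        exact ShortComplex.isoMk (Iso.refl _) (Iso.refl _) (Iso.refl _)
          (by rfl) (by simp [ChainComplex.toSingle₀Equiv]; rfl)
      all_goals rfl
    | succ n =>
      rw [quasiIsoAt_iff_exactAt' _ _ (ChainComplex.exactAt_succ_single_obj _ _)]
      exact D.complex_exactAt_succ n⟩

end SyzygyData

namespace ModuleSES

open Finsupp (linearCombination)

variable {R : Type u} [Ring R] (S : ModuleSES R)

noncomputable def syzygyDataA : SyzygyData R where
  X n := (S.syzygies n).A
  F n := ModuleCat.of R ((S.syzygies n).A →₀ R)
  projective _ := ModuleCat.projective_of_free Finsupp.basisSingleOne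
  ε _ := linearCombination R id
  surjective_ε _ := Finsupp.linearCombination_id_surjective R _
  ι _ := Submodule.subtype _
  injective_ι _ := Subtype.val_injective
  exact _ := LinearMap.exact_subtype_ker_map _

noncomputable def syzygyDataB : SyzygyData R where
  X n := (S.syzygies n).B
  F n := ModuleCat.of R (((S.syzygies n).A →₀ R) × ((S.syzygies n).C →₀ R))
  projective _ := ModuleCat.projective_of_free (Finsupp.basisSingleOne.prod Finsupp.basisSingleOne)
  ε n := (S.syzygies n).cover
  surjective_ε n := (S.syzygies n).cover_surjective
  ι _ := Submodule.subtype _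
  injective_ι _ := Subtype.val_injective
  exact _ := LinearMap.exact_subtype_ker_map _

noncomputable def syzygyDataC : SyzygyData R where
  X n := (S.syzygies n).C
  F n := ModuleCat.of R ((S.syzygies n).C →₀ R)
  projective _ := ModuleCat.projective_of_free Finsupp.basisSingleOne
  ε _ := linearCombination R id
  surjective_ε _ := Finsupp.linearCombination_id_surjective R _
  ι _ := Submodule.subtype _
  injective_ι _ := Subtype.val_injective
  exact _ := LinearMap.exact_subtype_ker_map _

noncomputable def horseshoe : ShortComplex (ChainComplex (ModuleCat.{u} R) ℕ) where
  X₁ := S.syzygyDataA.complex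
  X₂ := S.syzygyDataB.complex
  X₃ := S.syzygyDataC.complex
  f := ChainComplex.ofHom (fun n => ModuleCat.ofHom (LinearMap.inl R _ _)) fun n => by
    rw [SyzygyData.complex_d, SyzygyData.complex_d]
    exact ModuleCat.hom_ext (LinearMap.ext fun x => congrArg Subtype.val
      ((S.syzygies n).syzygy.cover_inl x))
  g := ChainComplex.ofHom (fun n => ModuleCat.ofHom (LinearMap.snd R _ _)) fun n => by
    rw [SyzygyData.complex_d, SyzygyData.complex_d]
    exact ModuleCat.hom_ext (LinearMap.ext fun x => congrArg Subtype.val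
      ((S.syzygies n).syzygy.p_cover x).symm)
  zero := by ext n : 2; rfl

noncomputable def horseshoeSplitting (n : ℕ) :
    (S.horseshoe.map (HomologicalComplex.eval _ _ n)).Splitting where
  r := ModuleCat.ofHom (LinearMap.fst R _ _)
  s := ModuleCat.ofHom (LinearMap.inr R _ _)
  f_r := rfl
  s_g := rfl
  id := by
    ext x
    exact Prod.ext (add_zero _) (zero_add _)

end ModuleSES

section Ext

variable {R : Type u} [CommRing R]

noncomputable def ModuleSES.extIsoExtSucc (S : ModuleSES R)
    (N : ModuleCat.{u} R) (k : ℕ)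
    (h₀ : IsZero (((Ext R (ModuleCat.{u} R) k).obj (Opposite.op S.B)).obj N))
    (h₁ : IsZero (((Ext R (ModuleCat.{u} R) (k + 1)).obj (Opposite.op S.B)).obj N)) :
    ((Ext R (ModuleCat.{u} R) k).obj (Opposite.op S.A)).obj N ≅
      ((Ext R (ModuleCat.{u} R) (k + 1)).obj (Opposite.op S.C)).obj N :=
  S.syzygyDataA.projectiveResolution.isoExt k N ≪≫
    (ChainComplex.shortExact_linearYonedaFunctor S.horseshoeSplitting N).δIso k (k + 1) rfl
      (h₀.of_iso (S.syzygyDataB.projectiveResolution.isoExt k N).symm)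
      (h₁.of_iso (S.syzygyDataB.projectiveResolution.isoExt (k + 1) N).symm) ≪≫
    (S.syzygyDataC.projectiveResolution.isoExt (k + 1) N).symm

noncomputable def extModIsoOfExact {A B C : Type u} [AddCommGroup A] [Module R A]
    [AddCommGroup B] [Module R B] [AddCommGroup C] [Module R C] {i : A →ₗ[R] B} {p : B →ₗ[R] C}
    (hi : Function.Injective i) (hp : Function.Surjective p) (hex : Function.Exact i p)
    (N : Type u) [AddCommGroup N] [Module R N] (k : ℕ)
    (h₀ : IsZero (extMod R k B N)) (h₁ : IsZero (extMod R (k + 1) B N)) :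
    extMod R k A N ≅ extMod R (k + 1) C N :=
  ModuleSES.extIsoExtSucc ⟨.of R A, .of R B, .of R C, i, p, hi, hp, hex⟩ (.of R N) k h₀ h₁

lemma isZero_extMod_succ_of_projective (P : Type u) [AddCommGroup P] [Module R P]
    [Module.Projective R P] (N : Type u) [AddCommGroup N] [Module R N] (k : ℕ) :
    IsZero (extMod R (k + 1) P N) :=
  have := (IsProjective.iff_projective P).1 ‹_›
  isZero_Ext_succ_of_projective _ _ k

lemma isZero_extMod_of_pdLE {m : ℕ} {P : Type u} [AddCommGroup P] [Module R P]
    (hP : pdLE R m P) (N : Type u) [AddCommGroup N] [Module R N] {k : ℕ} (hk : m < k) :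
    IsZero (extMod R k P N) := by
  induction m generalizing P k with
  | zero =>
    obtain ⟨j, rfl⟩ : ∃ j, k = j + 1 := ⟨k - 1, by omega⟩
    have : Module.Projective R P := hP
    exact isZero_extMod_succ_of_projective P N j
  | succ m ih =>
    obtain ⟨Q, _, _, f, _, hf, hK⟩ := hP
    obtain ⟨j, rfl⟩ : ∃ j, k = j + 1 := ⟨k - 1, by omega⟩
    obtain ⟨l, rfl⟩ : ∃ l, j = l + 1 := ⟨j - 1, by omega⟩
    exact (ih hK (by omega)).of_iso (extModIsoOfExact (Submodule.injective_subtype _) hf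
      f.exact_subtype_ker_map N (l + 1) (isZero_extMod_succ_of_projective Q N l)
      (isZero_extMod_succ_of_projective Q N (l + 1))).symm

end Ext

/-- Given a short exact sequence `0 → M → P → M → 0` with
`pd_R P ≤ m` finite, for every module `N` and every `k > m + 1` there is an
isomorphism `Ext^k_R(M,N) ≅ Ext^{k+1}_R(M,N)`. -/
theorem stmt16 (R : Type u) [CommRing R]
    (M : Type u) [AddCommGroup M] [Module R M]
    (P : Type u) [AddCommGroup P] [Module R P]
    (i : M →ₗ[R] P) (p : P →ₗ[R] M)
    (hi : Function.Injective i) (hp : Function.Surjective p) (hex : Function.Exact i p)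
    (m : ℕ) (hP : pdLE R m P) :
    ∀ (N : Type u) [AddCommGroup N] [Module R N], ∀ k : ℕ, m + 1 < k →
      Nonempty ((extMod R k M N) ≃ₗ[R] (extMod R (k + 1) M N)) := by
  intro N _ _ k hk
  exact ⟨(extModIsoOfExact hi hp hex N k (isZero_extMod_of_pdLE hP N (by omega))
    (isZero_extMod_of_pdLE hP N (by omega))).toLinearEquiv⟩
end
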